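/- For n ≥ 2, the basic sequent 1^n, ⊗(⊥^n) (n occurrences of 1 together with an n-fold tensor of ⊥s) is inhabited by exactly n! proof nets (with jumps targeting 1-occurrences), and these n! proof nets are pairwise inequivalent: no rewiring step is possible from any of them. -/

import Mathlib

namespace MLL

/-- Formulas of unit-only MLL, with every connective and unit occurrence
carrying a name (a natural number). -/
inductive Formula : Type
  | one : ℕ → Formula
  | bot : ℕ → Formula
  | parr : ℕ → Formula → Formula → Formula
  | tens : ℕ → Formula → Formula → Formula
deriving DecidableEq

namespace Formula

/-- The name of the root connective/unit of a formula. -/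
def name : Formula → ℕ
  | one n => n
  | bot n => n
  | parr n _ _ => n
  | tens n _ _ => n

/-- All names occurring in a formula. -/
def names : Formula → Finset ℕ
  | one n => {n}
  | bot n => {n}
  | parr n A B => insert n (A.names ∪ B.names)
  | tens n A B => insert n (A.names ∪ B.names)

/-- All subformula occurrences of a formula. -/
def subs : Formula → List Formula
  | one n => [one n]
  | bot n => [bot n]
  | parr n A B => parr n A B :: (A.subs ++ B.subs)
  | tens n A B => tens n A B :: (A.subs ++ B.subs)

end Formula

/-- A sequent is a multiset of (named) formulas. -/
abbrev Sequent := Multiset Formula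

/-- The names occurring in a sequent. -/
def seqNames (Γ : Sequent) : Finset ℕ := (Γ.map Formula.names).sup

/-- The subformula occurrences of a sequent. -/
def seqSubs (Γ : Sequent) : Multiset Formula :=
  Γ.bind (fun A => (A.subs : Multiset Formula))

/-- `A` is a subformula occurrence of `Γ`. -/
def HasSub (Γ : Sequent) (A : Formula) : Prop := A ∈ seqSubs Γ

/-- `a` is the name of a `⊥`-occurrence of `Γ`. -/
def IsBotName (Γ : Sequent) (a : ℕ) : Prop := HasSub Γ (.bot a)

/-- `a` is the name of a `1`-occurrence of `Γ`. -/
def IsOneName (Γ : Sequent) (a : ℕ) : Prop := HasSub Γ (.one a)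

/-- The sequent is well-named: all occurrences carry pairwise distinct names. -/
def WellNamed (Γ : Sequent) : Prop := ((seqSubs Γ).map Formula.name).Nodup

/-- A linking: a function assigning to (the name of) each `⊥`-occurrence
a target name (the jump). -/
abbrev Linking := ℕ → ℕ

/-- A switching: a choice of left/right for each par occurrence. -/
abbrev Switching := ℕ → Bool

/-- The linking sends (names of) `⊥`-occurrences to names of `Γ`. -/
def ValidLinking (Γ : Sequent) (lk : Linking) : Prop :=
  ∀ a, IsBotName Γ a → lk a ∈ seqNames Γ

/-- The edges of the switching graph for `Γ`, `lk` and the switching `σ`. -/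
def switchAdj (Γ : Sequent) (lk : Linking) (σ : Switching) (x y : ℕ) : Prop :=
  (∃ A B, HasSub Γ (.tens x A B) ∧ (y = A.name ∨ y = B.name)) ∨
  (∃ A B, HasSub Γ (.parr x A B) ∧ y = (if σ x then A.name else B.name)) ∨
  (IsBotName Γ x ∧ y = lk x)

/-- The switching graph for `Γ`, `lk` and `σ`. -/
def switchGraph (Γ : Sequent) (lk : Linking) (σ : Switching) : SimpleGraph ℕ :=
  SimpleGraph.fromRel (switchAdj Γ lk σ)

/-- Correctness of a linking: every switching graph (restricted to the names of `Γ`)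
is acyclic and connected, i.e. a tree.  `(Γ, lk)` is a proof net iff `Correct Γ lk`. -/
def Correct (Γ : Sequent) (lk : Linking) : Prop :=
  ValidLinking Γ lk ∧
  ∀ σ : Switching, ((switchGraph Γ lk σ).induce {x : ℕ | x ∈ seqNames Γ}).IsTree

/-- All jumps of the linking target `1`-occurrences. -/
def TargetsOnes (Γ : Sequent) (lk : Linking) : Prop :=
  ∀ a, IsBotName Γ a → IsOneName Γ (lk a)

/-- Two correct linkings describe the same proof net (they agree on all jumps). -/
def SameNet (Γ : Sequent) (lk lk' : Linking) : Prop :=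
  Correct Γ lk ∧ Correct Γ lk' ∧ ∀ a, IsBotName Γ a → lk a = lk' a

/-- A rewiring step between proof nets: the target of exactly one jump is changed. -/
def Rewire (Γ : Sequent) (lk lk' : Linking) : Prop :=
  Correct Γ lk ∧ Correct Γ lk' ∧
  ∃ a, IsBotName Γ a ∧ lk a ≠ lk' a ∧ ∀ b, IsBotName Γ b → b ≠ a → lk b = lk' b

/-- Equivalence of proof nets over `Γ`: the equivalence relation generated by rewiring. -/
def NetEquiv (Γ : Sequent) : Linking → Linking → Prop :=
  Relation.EqvGen (fun lk lk' => SameNet Γ lk lk' ∨ Rewire Γ lk lk')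

end MLL

namespace MLL

/-- `TBots f a` is the `(a+1)`-fold tensor `⊗(⊥^(a+1))`, drawing names from the
supply `f`. -/
def TBots (f : ℕ → ℕ) : ℕ → Formula
  | 0 => .bot (f 0)
  | a + 1 => .tens (f 0) (.bot (f 1)) (TBots (fun x => f (x + 2)) a)

end MLL

namespace MLL

/-- The sequent `1^n, ⊗(⊥^n)`: `n` occurrences of `1` (named `0, …, n-1`)
together with an `n`-fold tensor of `⊥`s (named from `n` onwards). -/
def onesTensBots (n : ℕ) : Sequent :=
  (Multiset.range n).map Formula.one + {TBots (fun x => n + x) (n - 1)}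

end MLL

/-!
Since `onesTensBots n` has no `⅋`, all its switching graphs coincide: the chain of tensors
`n, n + 2, …` with their factors, plus the `n` jumps. Connectedness forces every `1` to be
the target of a jump, and as there are as many `⊥`s as `1`s, a correct linking is a bijection
from the `⊥`s onto the `1`s. Conversely, for such a bijection, orient every edge from a tensor
to its factors and from a `⊥` to its target: the orientation increases a rank in which the `1`s
come last, and every vertex except the root `n` has exactly one incoming arc, so the graph is a
tree. The proof nets are therefore the `n!` bijections, and since two bijections cannot differ
at exactly one point, no rewiring step exists.
-/

namespace SimpleGraph

variable {V : Type*} {G : SimpleGraph V} (p : V → V → Prop)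

theorem isAcyclic_of_arcs {β : Type*} [LinearOrder β] (f : V → β)
    (hadj : ∀ ⦃x y⦄, G.Adj x y → p x y ∨ p y x) (hf : ∀ ⦃x y⦄, p x y → f x < f y)
    (hp : ∀ ⦃x x' y⦄, p x y → p x' y → x = x') : G.IsAcyclic := by
  classical
  intro u c hc
  -- Both cycle neighbours of a vertex of maximal rank send an arc into it.
  obtain ⟨m, hm, hmax⟩ := c.support.toFinset.exists_max_image f ⟨u, by simp⟩
  rw [List.mem_toFinset] at hm
  set c' := c.rotate m hm
  have hc' : c'.IsCycle := hc.rotate hm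
  have arc_to_m : ∀ y ∈ c'.support, G.Adj m y → p y m := fun y hy hmy =>
    (hadj hmy).resolve_left fun hmy' => (hf hmy').not_ge
      (hmax y (by simpa [c'] using hy))
  exact hc'.snd_ne_penultimate <|
    hp (arc_to_m _ (c'.getVert_mem_support 1) (c'.adj_snd hc'.not_nil))
      (arc_to_m _ (c'.getVert_mem_support _) (c'.adj_penultimate hc'.not_nil).symm)

theorem connected_of_arcs [Nonempty V] (f : V → ℕ) (root : V)
    (hadj : ∀ ⦃x y⦄, p x y → G.Adj x y) (hf : ∀ ⦃x y⦄, p x y → f x < f y)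
    (hroot : ∀ y, y ≠ root → ∃ x, p x y) : G.Connected := by
  have reach : ∀ y, G.Reachable root y := by
    intro y
    induction h : f y using Nat.strong_induction_on generalizing y with
    | _ k ih =>
      by_cases hy : y = root
      · exact hy ▸ .rfl
      obtain ⟨x, hxy⟩ := hroot y hy
      exact (ih (f x) (h ▸ hf hxy) x rfl).trans (hadj hxy).reachable
  exact (connected_iff_exists_forall_reachable G).mpr ⟨root, reach⟩

theorem isTree_of_arcs (f : V → ℕ) (root : V)
    (hadj : ∀ x y, G.Adj x y ↔ p x y ∨ p y x) (hf : ∀ ⦃x y⦄, p x y → f x < f y)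
    (hroot : ∀ y, y ≠ root → ∃ x, p x y) (hp : ∀ ⦃x x' y⦄, p x y → p x' y → x = x') :
    G.IsTree :=
  have : Nonempty V := ⟨root⟩
  ⟨connected_of_arcs p f root (fun x y h => (hadj x y).mpr (.inl h)) hf hroot,
    isAcyclic_of_arcs p f (fun x y => (hadj x y).mp) hf hp⟩

end SimpleGraph

theorem Finset.bijOn_of_surjOn_of_card_le {α β : Type*} {s : Finset α} {t : Finset β}
    {f : α → β} (hf : Set.SurjOn f s t) (hst : s.card ≤ t.card) : Set.BijOn f s t := by
  classical
  refine (image_eq_iff_bijOn_of_card hst).mp (eq_of_subset_of_card_le ?_ ?_).symm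
  · exact surjOn_iff_subset_image.mp hf
  · exact card_image_le.trans hst

theorem Set.BijOn.apply_eq_of_eqOn_diff_singleton {α β : Type*} {s : Set α} {t : Set β}
    {f g : α → β} {a : α} (hf : Set.BijOn f s t) (hg : Set.BijOn g s t) (ha : a ∈ s)
    (hfg : Set.EqOn f g (s \ {a})) : f a = g a := by
  obtain ⟨b, hb, hfb⟩ := hf.surjOn (hg.mapsTo ha)
  by_contra hne
  have hba : b ≠ a := by rintro rfl; exact hne hfb
  exact hba (hg.injOn hb ha ((hfg ⟨hb, hba⟩).symm.trans hfb))

theorem Set.ncard_bijOn_eq_factorial {α β : Type*} (s : Set α) (t : Set β) [Finite s] [Finite t]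
    (hst : Nat.card s = Nat.card t) (b : β) :
    {f : α → β | Set.BijOn f s t ∧ ∀ a ∉ s, f a = b}.ncard = (Nat.card s).factorial := by
  classical
  obtain ⟨e⟩ := Finite.card_eq.mp hst
  let E : {f : α → β | Set.BijOn f s t ∧ ∀ a ∉ s, f a = b} ≃ (s ≃ t) :=
    { toFun := fun f => f.2.1.equiv
      invFun := fun g => ⟨fun a => if h : a ∈ s then g ⟨a, h⟩ else b,
        ⟨fun a ha => by simp [ha],
         fun a ha a' ha' h => congrArg Subtype.val
           (g.injective (Subtype.ext (by simpa [ha, ha'] using h)) : (⟨a, ha⟩ : s) = ⟨a', ha'⟩),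
         fun y hy => by
           obtain ⟨⟨a, ha⟩, hga⟩ := g.surjective ⟨y, hy⟩
           exact ⟨a, ha, by simp [ha, hga]⟩⟩,
        fun a ha => by simp [ha]⟩
      left_inv := fun f => by
        ext a
        by_cases ha : a ∈ s
        · exact dif_pos ha
        · simp [ha, f.2.2 a ha]
      right_inv := fun g => by ext ⟨a, ha⟩; exact dif_pos ha }
  rw [← Nat.card_coe_set_eq, Nat.card_congr E, Nat.card_congr ((Equiv.refl s).equivCongr e.symm),
    Nat.card_perm]

namespace MLL

section SameNet

variable {Γ : Sequent} {lk lk' lk'' : Linking}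

theorem SameNet.symm (h : SameNet Γ lk lk') : SameNet Γ lk' lk :=
  ⟨h.2.1, h.1, fun a ha => (h.2.2 a ha).symm⟩

theorem SameNet.trans (h : SameNet Γ lk lk') (h' : SameNet Γ lk' lk'') : SameNet Γ lk lk'' :=
  ⟨h.1, h'.2.1, fun a ha => (h.2.2 a ha).trans (h'.2.2 a ha)⟩

theorem sameNet_of_netEquiv (hΓ : ∀ lk lk', ¬ Rewire Γ lk lk') (hc : Correct Γ lk)
    (h : NetEquiv Γ lk lk') : SameNet Γ lk lk' := by
  have hequiv : Equivalence fun l l' => l = l' ∨ SameNet Γ l l' :=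
    ⟨fun _ => .inl rfl,
      fun | .inl h => .inl h.symm | .inr h => .inr h.symm,
      fun | .inl rfl, h => h | .inr h, .inl rfl => .inr h | .inr h, .inr h' => .inr (h.trans h')⟩
  rcases hequiv.eqvGen_iff.mp
    (Relation.EqvGen.mono (fun l l' h => h.elim .inr fun h => absurd h (hΓ l l')) _ _ h) with
    rfl | h
  · exact ⟨hc, hc, fun _ _ => rfl⟩
  · exact h

end SameNet

theorem tBots_succ (c a : ℕ) :
    TBots (c + ·) (a + 1) = .tens c (.bot (c + 1)) (TBots (c + 2 + ·) a) := by
  simp only [TBots, add_zero]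
  congr 2
  funext x
  omega

theorem name_tBots (c a : ℕ) : (TBots (c + ·) a).name = c := by
  cases a <;> rfl

theorem names_tBots (c a : ℕ) : (TBots (c + ·) a).names = Finset.Icc c (c + 2 * a) := by
  induction a generalizing c with
  | zero => simp [TBots, Formula.names]
  | succ a ih =>
    ext y
    simp only [tBots_succ, Formula.names, ih, Finset.mem_insert, Finset.mem_union,
      Finset.mem_singleton, Finset.mem_Icc]
    omega

theorem mem_subs_tBots {c a : ℕ} {A : Formula} :
    A ∈ (TBots (c + ·) a).subs ↔
      (∃ i ≤ a, A = TBots (c + 2 * i + ·) (a - i)) ∨ ∃ i < a, A = .bot (c + 2 * i + 1) := by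
  induction a generalizing c with
  | zero => simp [TBots, Formula.subs]
  | succ a ih =>
    have hc : ∀ i, c + 2 + 2 * i = c + 2 * (i + 1) := fun i => by omega
    rw [tBots_succ, Formula.subs, List.mem_cons, List.mem_append, ih]
    simp_rw [← Nat.lt_add_one_iff, Nat.exists_lt_succ_left]
    simp only [hc, Formula.subs, List.mem_singleton, Nat.add_sub_add_right, mul_zero, add_zero,
      Nat.sub_zero, zero_add, mul_one, Nat.add_sub_cancel, tBots_succ]
    simp only [or_assoc, or_left_comm]

theorem tBots_eq_bot_iff {c a b : ℕ} : TBots (c + ·) a = .bot b ↔ a = 0 ∧ b = c := by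
  cases a with
  | zero => simp [TBots, eq_comm]
  | succ a => simp [tBots_succ]

theorem tBots_eq_tens_iff {c a x : ℕ} {A B : Formula} :
    TBots (c + ·) a = .tens x A B ↔
      0 < a ∧ x = c ∧ A = .bot (c + 1) ∧ B = TBots (c + 2 + ·) (a - 1) := by
  cases a with
  | zero => simp [TBots]
  | succ a => simp [tBots_succ, eq_comm]

theorem tBots_ne_one (c a b : ℕ) : TBots (c + ·) a ≠ .one b := by
  cases a <;> simp [TBots]

theorem tBots_ne_parr (c a x : ℕ) (A B : Formula) : TBots (c + ·) a ≠ .parr x A B := by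
  cases a <;> simp [TBots]

theorem hasSub_onesTensBots_iff {n : ℕ} {A : Formula} :
    HasSub (onesTensBots n) A ↔ (∃ i < n, A = .one i) ∨
      (∃ i ≤ n - 1, A = TBots (n + 2 * i + ·) (n - 1 - i)) ∨
      ∃ i < n - 1, A = .bot (n + 2 * i + 1) := by
  simp [HasSub, seqSubs, onesTensBots, Formula.subs, mem_subs_tBots, eq_comm]

/-- The names of the `⊥`s of `onesTensBots n`: the left factors `n + 2 * i + 1` of the
tensors `n + 2 * i`, and the last factor. -/
def botNames (n : ℕ) : Finset ℕ :=
  insert (n + 2 * (n - 1)) ((Finset.range (n - 1)).image (n + 2 * · + 1))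

theorem card_botNames {n : ℕ} (hn : 0 < n) : (botNames n).card = n := by
  rw [botNames, Finset.card_insert_of_notMem, Finset.card_image_of_injective _
    (fun a b h => by simpa using h), Finset.card_range]
  · omega
  · simp only [Finset.mem_image, Finset.mem_range, not_exists, not_and]
    omega

theorem botNames_subset_Icc (n : ℕ) : botNames n ⊆ Finset.Icc n (n + 2 * (n - 1)) := by
  intro b hb
  simp only [botNames, Finset.mem_insert, Finset.mem_image, Finset.mem_range] at hb
  rw [Finset.mem_Icc]
  rcases hb with rfl | ⟨i, hi, rfl⟩ <;> omega

theorem isBotName_onesTensBots_iff {n b : ℕ} :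
    IsBotName (onesTensBots n) b ↔ b ∈ botNames n := by
  simp only [IsBotName, hasSub_onesTensBots_iff, botNames]
  simp only [reduceCtorEq, and_false, exists_const, eq_comm, tBots_eq_bot_iff, Formula.bot.injEq,
    false_or, Finset.mem_insert, Finset.mem_image, Finset.mem_range]
  refine or_congr_left ⟨?_, fun h => ⟨n - 1, le_rfl, by omega, h⟩⟩
  rintro ⟨i, hi, hi', rfl⟩
  omega

theorem isOneName_onesTensBots_iff {n b : ℕ} : IsOneName (onesTensBots n) b ↔ b < n := by
  simp [IsOneName, hasSub_onesTensBots_iff, (tBots_ne_one _ _ _).symm]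

theorem hasSub_onesTensBots_tens_iff {n x : ℕ} {A B : Formula} :
    HasSub (onesTensBots n) (.tens x A B) ↔ ∃ i < n - 1, x = n + 2 * i ∧
      A = .bot (n + 2 * i + 1) ∧ B = TBots (n + 2 * i + 2 + ·) (n - 1 - i - 1) := by
  simp only [hasSub_onesTensBots_iff, eq_comm (a := Formula.tens x A B), tBots_eq_tens_iff]
  simp only [reduceCtorEq, and_false, exists_const, tsub_pos_iff_lt, or_false, false_or]
  exact ⟨fun ⟨i, _, h⟩ => ⟨i, h⟩, fun ⟨i, h⟩ => ⟨i, h.1.le, h⟩⟩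

theorem not_hasSub_onesTensBots_parr {n x : ℕ} {A B : Formula} :
    ¬ HasSub (onesTensBots n) (.parr x A B) := by
  simp [hasSub_onesTensBots_iff, (tBots_ne_parr _ _ _ _ _).symm]

theorem mem_seqNames_onesTensBots {n v : ℕ} (hn : 0 < n) :
    v ∈ seqNames (onesTensBots n) ↔ v < 3 * n - 1 := by
  have hones : ((Multiset.range n).map (Formula.names ∘ Formula.one)).sup = Finset.range n := by
    ext y
    simp [← Finset.range_val, ← Finset.sup_def, Formula.names]
  simp only [seqNames, onesTensBots, Multiset.map_add, Multiset.map_map, Multiset.sup_add, hones,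
    Multiset.map_singleton, Multiset.sup_singleton, names_tBots, Finset.sup_eq_union,
    Finset.mem_union, Finset.mem_range, Finset.mem_Icc]
  omega

/-- The edges of every switching graph of `onesTensBots n`, oriented from a tensor to its
factors and from a `⊥` to its jump target. -/
def Arc (n : ℕ) (lk : Linking) (x y : ℕ) : Prop :=
  (∃ i < n - 1, x = n + 2 * i ∧ (y = n + 2 * i + 1 ∨ y = n + 2 * i + 2)) ∨
    (x ∈ botNames n ∧ y = lk x)

theorem switchAdj_onesTensBots_iff {n : ℕ} {lk : Linking} {σ : Switching} {x y : ℕ} :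
    switchAdj (onesTensBots n) lk σ x y ↔ Arc n lk x y := by
  simp [switchAdj, Arc, hasSub_onesTensBots_tens_iff, not_hasSub_onesTensBots_parr,
    isBotName_onesTensBots_iff, Formula.name.eq_2, name_tBots, and_assoc]

theorem switchGraph_onesTensBots_adj {n : ℕ} {lk : Linking} {σ : Switching} {x y : ℕ} :
    (switchGraph (onesTensBots n) lk σ).Adj x y ↔ x ≠ y ∧ (Arc n lk x y ∨ Arc n lk y x) := by
  simp [switchGraph, switchAdj_onesTensBots_iff]

section Arc

variable {n : ℕ} {lk : Linking} {x x' y : ℕ}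

def arcRank (n v : ℕ) : ℕ := if v < n then v + 3 * n else v

theorem arcRank_lt_of_arc (hlk : Set.MapsTo lk (botNames n) (Set.Iio n)) (h : Arc n lk x y) :
    arcRank n x < arcRank n y := by
  unfold arcRank
  rcases h with ⟨i, hi, rfl, rfl | rfl⟩ | ⟨hx, rfl⟩
  · split_ifs <;> omega
  · split_ifs <;> omega
  · have hlt : lk x < n := hlk hx
    have := Finset.mem_Icc.mp (botNames_subset_Icc n hx)
    split_ifs <;> omega

theorem exists_arc_to (hlk : Set.SurjOn lk (botNames n) (Set.Iio n)) (hy : y < 3 * n - 1)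
    (hyn : y ≠ n) : ∃ x < 3 * n - 1, Arc n lk x y := by
  by_cases hy' : y < n
  · obtain ⟨b, hb, rfl⟩ := hlk (show y ∈ Set.Iio n from hy')
    have := Finset.mem_Icc.mp (botNames_subset_Icc n hb)
    exact ⟨b, by omega, .inr ⟨hb, rfl⟩⟩
  · exact ⟨n + 2 * ((y - n - 1) / 2), by omega, .inl ⟨(y - n - 1) / 2, by omega, rfl, by omega⟩⟩

theorem arc_left_unique (hmaps : Set.MapsTo lk (botNames n) (Set.Iio n))
    (hinj : Set.InjOn lk (botNames n)) (h : Arc n lk x y) (h' : Arc n lk x' y) : x = x' := by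
  rcases h with ⟨i, hi, rfl, hy⟩ | ⟨hx, rfl⟩ <;> rcases h' with ⟨i', hi', rfl, hy'⟩ | ⟨hx', hy'⟩
  · omega
  · have : lk x' < n := hmaps hx'
    omega
  · have : lk x < n := hmaps hx
    omega
  · exact hinj hx hx' hy'

end Arc

theorem correct_onesTensBots_of_bijOn {n : ℕ} {lk : Linking} (hn : 0 < n)
    (hlk : Set.BijOn lk (botNames n) (Set.Iio n)) : Correct (onesTensBots n) lk := by
  have hS : ∀ v, v ∈ seqNames (onesTensBots n) ↔ v < 3 * n - 1 := fun v =>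
    mem_seqNames_onesTensBots hn
  refine ⟨fun b hb => ?_, fun σ => ?_⟩
  · have : lk b < n := hlk.mapsTo (isBotName_onesTensBots_iff.mp hb)
    exact (hS _).mpr (by omega)
  · refine SimpleGraph.isTree_of_arcs (fun u v => Arc n lk u v) (fun v => arcRank n v)
      ⟨n, (hS n).mpr (by omega)⟩ ?_ (fun u v => arcRank_lt_of_arc hlk.mapsTo) ?_
      (fun u u' v h h' => Subtype.ext (arc_left_unique hlk.mapsTo hlk.injOn h h'))
    · rintro ⟨u, hu⟩ ⟨v, hv⟩
      change (switchGraph _ lk σ).Adj u v ↔ _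
      rw [switchGraph_onesTensBots_adj, and_iff_right_iff_imp]
      rintro (h | h) rfl <;> exact lt_irrefl _ (arcRank_lt_of_arc hlk.mapsTo h)
    · rintro ⟨v, hv⟩ hvn
      obtain ⟨u, hu, huv⟩ := exists_arc_to hlk.surjOn ((hS v).mp hv) (fun h => hvn (Subtype.ext h))
      exact ⟨⟨u, (hS u).mpr hu⟩, huv⟩

theorem bijOn_of_correct_onesTensBots {n : ℕ} {lk : Linking} (hn : 0 < n)
    (hc : Correct (onesTensBots n) lk) : Set.BijOn lk (botNames n) (Set.Iio n) := by
  have hS : ∀ v, v ∈ seqNames (onesTensBots n) ↔ v < 3 * n - 1 := fun v =>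
    mem_seqNames_onesTensBots hn
  have hsurj : Set.SurjOn lk (botNames n) (Finset.range n) := by
    intro j hj
    rw [Finset.coe_range, Set.mem_Iio] at hj
    let r : {x | x ∈ seqNames (onesTensBots n)} := ⟨n, (hS n).mpr (by omega)⟩
    let v : {x | x ∈ seqNames (onesTensBots n)} := ⟨j, (hS j).mpr (by omega)⟩
    have : Nontrivial {x | x ∈ seqNames (onesTensBots n)} :=
      nontrivial_of_ne v r fun h => by simp [v, r] at h; omega
    -- In a connected switching graph the `1` named `j` has a neighbour; only a jump can reach it.
    obtain ⟨⟨u, _⟩, hu⟩ := (hc.2 fun _ => false).connected.preconnected.exists_adj_of_nontrivial v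
    change (switchGraph _ lk _).Adj j u at hu
    rw [switchGraph_onesTensBots_adj] at hu
    rcases hu with ⟨-, (⟨i, -, rfl, -⟩ | ⟨hj', -⟩) | (⟨i, -, -, rfl | rfl⟩ | ⟨hu, rfl⟩)⟩
    · omega
    · have := Finset.mem_Icc.mp (botNames_subset_Icc n hj')
      omega
    · omega
    · omega
    · exact ⟨u, hu, rfl⟩
  rw [← Finset.coe_range]
  exact Finset.bijOn_of_surjOn_of_card_le hsurj (by rw [card_botNames hn, Finset.card_range])

theorem correct_onesTensBots_iff {n : ℕ} {lk : Linking} (hn : 0 < n) :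
    Correct (onesTensBots n) lk ↔ Set.BijOn lk (botNames n) (Set.Iio n) :=
  ⟨bijOn_of_correct_onesTensBots hn, correct_onesTensBots_of_bijOn hn⟩

theorem not_rewire_onesTensBots {n : ℕ} (hn : 0 < n) (lk lk' : Linking) :
    ¬ Rewire (onesTensBots n) lk lk' := by
  rintro ⟨hc, hc', a, ha, hne, hrest⟩
  rw [correct_onesTensBots_iff hn] at hc hc'
  rw [isBotName_onesTensBots_iff] at ha
  exact hne (hc.apply_eq_of_eqOn_diff_singleton hc' ha
    fun b hb => hrest b (isBotName_onesTensBots_iff.mpr hb.1) hb.2)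

end MLL

open MLL in
/-- For `n ≥ 2`, the sequent `1^n, ⊗(⊥^n)` is inhabited by
exactly `n!` proof nets (with jumps targeting `1`-occurrences; linkings are
normalised to `0` outside the `⊥`-names so that they correspond bijectively to
proof nets), these nets are pairwise inequivalent, and no rewiring step is
possible from any of them. -/
theorem mll_ones_tens_bots_factorial (n : ℕ) (hn : 2 ≤ n) :
    {lk : Linking | Correct (onesTensBots n) lk ∧ TargetsOnes (onesTensBots n) lk ∧
        ∀ a, ¬ IsBotName (onesTensBots n) a → lk a = 0}.ncard = n.factorial ∧
    (∀ lk lk' : Linking, ¬ Rewire (onesTensBots n) lk lk') ∧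
    (∀ lk lk' : Linking, Correct (onesTensBots n) lk → Correct (onesTensBots n) lk' →
      NetEquiv (onesTensBots n) lk lk' → SameNet (onesTensBots n) lk lk') := by
  have hpos : 0 < n := by omega
  have hnets : {lk : Linking | Correct (onesTensBots n) lk ∧ TargetsOnes (onesTensBots n) lk ∧
      ∀ a, ¬ IsBotName (onesTensBots n) a → lk a = 0} =
      {lk | Set.BijOn lk (botNames n) (Set.Iio n) ∧ ∀ a ∉ (botNames n : Set ℕ), lk a = 0} := by
    ext lk
    simp only [Set.mem_ofPred_eq, correct_onesTensBots_iff hpos, TargetsOnes,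
      isBotName_onesTensBots_iff, isOneName_onesTensBots_iff]
    exact and_congr_right fun h => and_iff_right h.mapsTo
  refine ⟨?_, not_rewire_onesTensBots hpos,
    fun lk lk' hc _ => sameNet_of_netEquiv (not_rewire_onesTensBots hpos) hc⟩
  rw [hnets, Set.ncard_bijOn_eq_factorial _ _ ?_ 0] <;> simp [card_botNames hpos]
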